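/- For two locks, the blocking types (P_1P_1, P_1), (P_1, P_1P_1), and (P_1, P_1) are impossible for a correct compositional translation: in each case one can construct an execution of the translation of a must-convergent SYNCSIMPLE process (e.g. !✓ | ?✓ or ! | ?✓) that ends in a deadlock. -/

import Mathlib

/-- Symbols of SYNCSIMPLE: `!` (bang) and `?` (ques). -/
inductive SSym | bang | ques
deriving DecidableEq

/-- A SYNCSIMPLE subprocess: a string over {!,?} ending with `0` (false) or `✓` (true). -/
abbrev SSub := List SSym × Bool

/-- A SYNCSIMPLE process: a multiset of subprocesses. -/
abbrev SProc := Multiset SSub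

/-- The SYS reduction: a leading `!` and a leading `?` of two subprocesses are consumed. -/
def SysStep (P Q : SProc) : Prop :=
  ∃ (u1 u2 : List SSym) (b1 b2 : Bool) (R : SProc),
    P = (SSym.bang :: u1, b1) ::ₘ (SSym.ques :: u2, b2) ::ₘ R ∧
    Q = (u1, b1) ::ₘ (u2, b2) ::ₘ R

/-- A process is successful if it contains the subprocess `✓`. -/
def SSuccessful (P : SProc) : Prop := (([], true) : SSub) ∈ P

def SMayConv (P : SProc) : Prop :=
  ∃ Q, Relation.ReflTransGen SysStep P Q ∧ SSuccessful Q

def SMustConv (P : SProc) : Prop :=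
  ∀ Q, Relation.ReflTransGen SysStep P Q → SMayConv Q

/-- Lock operations: put `P_i` and take `T_i`. -/
inductive LOp | put | take
deriving DecidableEq

abbrev LSym (k : ℕ) := LOp × Fin k
abbrev LSub (k : ℕ) := List (LSym k) × Bool
abbrev LProc (k : ℕ) := Multiset (LSub k)
/-- The store of `k` locks: `true` = full (■), `false` = empty (□). -/
abbrev Store (k : ℕ) := Fin k → Bool

/-- LOCKSIMPLE step: `P_i` fills an empty lock `i` (blocks if full);
    `T_i` empties lock `i` and never blocks. -/
def LockStep {k : ℕ} : (LProc k × Store k) → (LProc k × Store k) → Prop :=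
  fun s t => ∃ (i : Fin k) (u : List (LSym k)) (b : Bool) (R : LProc k),
    ((s.1 = ((LOp.put, i) :: u, b) ::ₘ R ∧ s.2 i = false ∧
      t.1 = (u, b) ::ₘ R ∧ t.2 = Function.update s.2 i true) ∨
     (s.1 = ((LOp.take, i) :: u, b) ::ₘ R ∧
      t.1 = (u, b) ::ₘ R ∧ t.2 = Function.update s.2 i false))

def LSuccessful {k : ℕ} (s : LProc k × Store k) : Prop := (([], true) : LSub k) ∈ s.1

def LMayConv {k : ℕ} (s : LProc k × Store k) : Prop :=
  ∃ t, Relation.ReflTransGen LockStep s t ∧ LSuccessful t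

def LMustConv {k : ℕ} (s : LProc k × Store k) : Prop :=
  ∀ t, Relation.ReflTransGen LockStep s t → LMayConv t

/-- The compositional translation determined by the strings `tb = τ(!)` and `tq = τ(?)`,
    applied to a subprocess. -/
def transSub {k : ℕ} (tb tq : List (LSym k)) (u : SSub) : LSub k :=
  (u.1.flatMap (fun c => match c with | SSym.bang => tb | SSym.ques => tq), u.2)

/-- The compositional translation applied to a process. -/
def transProc {k : ℕ} (tb tq : List (LSym k)) (P : SProc) : LProc k :=
  P.map (transSub tb tq)

/-- Correctness of the compositional translation `(tb, tq)` with initial store `IS`: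
    may- and must-convergence are preserved and reflected. -/
def Correct {k : ℕ} (IS : Store k) (tb tq : List (LSym k)) : Prop :=
  ∀ P : SProc,
    (SMayConv P ↔ LMayConv (transProc tb tq P, IS)) ∧
    (SMustConv P ↔ LMustConv (transProc tb tq P, IS))

/-- The solo execution of the string `s` from store `IS` reaches the point where
    `(put, i) :: rest` remains and deadlocks there since lock `i` is full. -/
def SoloBlocked {k : ℕ} (IS : Store k) (s : List (LSym k)) (i : Fin k)
    (rest : List (LSym k)) : Prop :=
  ∃ C : Store k,
    Relation.ReflTransGen LockStep (({(s, false)} : LProc k), IS)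
      (({((LOp.put, i) :: rest, false)} : LProc k), C) ∧
    C i = true

/-- Blocking type `P_i`: the blocking prefix is `R P_i` with `R` free of `P_i, T_i`. -/
def BlockingTypeP {k : ℕ} (IS : Store k) (s : List (LSym k)) (i : Fin k) : Prop :=
  ∃ r rest, s = r ++ (LOp.put, i) :: rest ∧ (∀ x ∈ r, x.2 ≠ i) ∧
    SoloBlocked IS s i rest

/-- Blocking type `P_i P_i`: the blocking prefix is `R₁ P_i R₂ P_i` with
    `R₂` free of `P_i, T_i`, deadlocking exactly before the last `P_i`. -/
def BlockingTypePP {k : ℕ} (IS : Store k) (s : List (LSym k)) (i : Fin k) : Prop :=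
  ∃ r1 r2 rest, s = r1 ++ (LOp.put, i) :: r2 ++ (LOp.put, i) :: rest ∧
    (∀ x ∈ r2, x.2 ≠ i) ∧ SoloBlocked IS s i rest

/-!
The SYNCSIMPLE process `!✓ | ?✓` is must-convergent, so a correct translation makes
`τ(!)✓ | τ(?)✓` must-convergent as well. In each of the three blocking types one of the two
strings, run alone, stops in front of `P_1` with lock `1` full, while the other string reaches
its first `P_1` without touching lock `1`. Running the first string to its blocking point and
then the second one as far as it goes leaves both strings waiting on a put to a full lock:
a deadlock without success, contradicting must-convergence. (The paper's lock `1` is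
`0 : Fin 2`.)
-/

namespace SSuccessful

theorem sysStep {P Q : SProc} (hP : SSuccessful P) (h : SysStep P Q) : SSuccessful Q := by
  obtain ⟨u1, u2, b1, b2, R, rfl, rfl⟩ := h
  unfold SSuccessful at hP ⊢
  simp only [Multiset.mem_cons, Prod.mk.injEq, reduceCtorEq, false_and, false_or] at hP
  exact Multiset.mem_cons_of_mem (Multiset.mem_cons_of_mem hP)

theorem reflTransGen {P Q : SProc} (hP : SSuccessful P) (h : Relation.ReflTransGen SysStep P Q) :
    SSuccessful Q := by
  induction h with
  | refl => exact hP
  | tail _ hstep ih => exact ih.sysStep hstep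

end SSuccessful

/-- The SYNCSIMPLE process `!✓ | ?✓`. -/
def bangQues : SProc := ([SSym.bang], true) ::ₘ {([SSym.ques], true)}

theorem SysStep.successful_of_bangQues {Q : SProc} (h : SysStep bangQues Q) : SSuccessful Q := by
  obtain ⟨u1, u2, b1, b2, R, hP, rfl⟩ := h
  have hbang : (SSym.bang :: u1, b1) ∈ bangQues := hP ▸ Multiset.mem_cons_self _ _
  simp only [bangQues, Multiset.mem_cons, Multiset.mem_singleton, Prod.mk.injEq,
    List.cons.injEq, reduceCtorEq, false_and, or_false] at hbang
  obtain ⟨⟨-, rfl⟩, rfl⟩ := hbang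
  exact Multiset.mem_cons_self _ _

theorem sMustConv_bangQues : SMustConv bangQues := by
  intro Q hQ
  rcases hQ.cases_head with rfl | ⟨Q', hstep, hrest⟩
  · exact ⟨_, .single ⟨[], [], true, true, 0, rfl, rfl⟩, Multiset.mem_cons_self _ _⟩
  · exact ⟨Q, .refl, (hstep.successful_of_bangQues).reflTransGen hrest⟩

section LockSimple

variable {k : ℕ}

theorem LockStep.map_flag (c : Bool) {s t : LProc k × Store k} (h : LockStep s t) :
    LockStep (s.1.map (fun x => (x.1, c)), s.2) (t.1.map (fun x => (x.1, c)), t.2) := by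
  obtain ⟨i, u, b, R, ⟨h1, h2, h3, h4⟩ | ⟨h1, h3, h4⟩⟩ := h
  · exact ⟨i, u, c, R.map (fun x => (x.1, c)), Or.inl ⟨by simp [h1], h2, by simp [h3], h4⟩⟩
  · exact ⟨i, u, c, R.map (fun x => (x.1, c)), Or.inr ⟨by simp [h1], by simp [h3], h4⟩⟩

theorem LockStep.add_right (R' : LProc k) {s t : LProc k × Store k} (h : LockStep s t) :
    LockStep (s.1 + R', s.2) (t.1 + R', t.2) := by
  obtain ⟨i, u, b, R, ⟨h1, h2, h3, h4⟩ | ⟨h1, h3, h4⟩⟩ := h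
  · exact ⟨i, u, b, R + R', Or.inl ⟨by simp [h1], h2, by simp [h3], h4⟩⟩
  · exact ⟨i, u, b, R + R', Or.inr ⟨by simp [h1], by simp [h3], h4⟩⟩

theorem reflTransGen_lockStep_cons_of_solo {u v : List (LSym k)} {S S' : Store k}
    (h : Relation.ReflTransGen LockStep (({(u, false)} : LProc k), S) ({(v, false)}, S'))
    (b : Bool) (R : LProc k) :
    Relation.ReflTransGen LockStep ((u, b) ::ₘ R, S) ((v, b) ::ₘ R, S') := by
  have h' := h.lift (fun s => (s.1.map (fun x => (x.1, b)) + R, s.2))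
    fun _ _ hst => (hst.map_flag b).add_right R
  simpa only [Function.onFun, Multiset.map_singleton, Multiset.singleton_add] using h'

theorem exists_run_to_full_put {i : Fin k} (rest : List (LSym k)) (b : Bool) (R : LProc k) :
    ∀ (r : List (LSym k)) (S : Store k), (∀ x ∈ r, x.2 ≠ i) → S i = true →
      ∃ (j : Fin k) (l : List (LSym k)) (C : Store k),
        Relation.ReflTransGen LockStep ((r ++ (LOp.put, i) :: rest, b) ::ₘ R, S)
          (((LOp.put, j) :: l, b) ::ₘ R, C) ∧ C j = true ∧ C i = true := by
  intro r
  induction r with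
  | nil => exact fun S _ hSi => ⟨i, rest, S, .refl, hSi, hSi⟩
  | cons x r ih =>
    intro S hfree hSi
    obtain ⟨op, j⟩ := x
    have hji : j ≠ i := hfree _ List.mem_cons_self
    have hfree' : ∀ y ∈ r, y.2 ≠ i := fun y hy => hfree y (List.mem_cons_of_mem _ hy)
    have hupdate (c : Bool) : Function.update S j c i = true := by
      rw [Function.update_of_ne hji.symm]; exact hSi
    cases op with
    | take =>
      obtain ⟨j', l, C, hrun, hj', hi⟩ := ih _ hfree' (hupdate false)
      exact ⟨j', l, C, .head ⟨j, _, b, R, Or.inr ⟨rfl, rfl, rfl⟩⟩ hrun, hj', hi⟩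
    | put =>
      cases hSj : S j with
      | true => exact ⟨j, _, S, .refl, hSj, hSi⟩
      | false =>
        obtain ⟨j', l, C, hrun, hj', hi⟩ := ih _ hfree' (hupdate true)
        exact ⟨j', l, C, .head ⟨j, _, b, R, Or.inl ⟨rfl, hSj, rfl, rfl⟩⟩ hrun, hj', hi⟩

def AllPutsBlocked (s : LProc k × Store k) : Prop :=
  ∀ x ∈ s.1, ∃ (j : Fin k) (l : List (LSym k)), x.1 = (LOp.put, j) :: l ∧ s.2 j = true

theorem AllPutsBlocked.not_lockStep {s t : LProc k × Store k} (hs : AllPutsBlocked s) :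
    ¬ LockStep s t := by
  rintro ⟨i, u, b, R, ⟨h1, h2, -⟩ | ⟨h1, -⟩⟩
  · obtain ⟨j, l, heq, hj⟩ := hs _ (h1 ▸ Multiset.mem_cons_self _ _)
    simp only [List.cons.injEq, Prod.mk.injEq, true_and] at heq
    rw [heq.1, hj] at h2
    exact Bool.noConfusion h2
  · obtain ⟨j, l, heq, -⟩ := hs _ (h1 ▸ Multiset.mem_cons_self _ _)
    simp at heq

theorem AllPutsBlocked.not_lMayConv {s : LProc k × Store k} (hs : AllPutsBlocked s) :
    ¬ LMayConv s := by
  rintro ⟨t, hrun, hsucc⟩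
  rcases hrun.cases_head with rfl | ⟨t', hstep, -⟩
  · obtain ⟨j, l, heq, -⟩ := hs _ hsucc
    simp at heq
  · exact hs.not_lockStep hstep

theorem not_lMustConv_of_soloBlocked {IS : Store k} {s r rest' : List (LSym k)} {i : Fin k}
    {rest : List (LSym k)} (hs : SoloBlocked IS s i rest) (hr : ∀ x ∈ r, x.2 ≠ i)
    (b b' : Bool) :
    ¬ LMustConv ((s, b) ::ₘ {(r ++ (LOp.put, i) :: rest', b')}, IS) := by
  obtain ⟨C, hsolo, hCi⟩ := hs
  obtain ⟨j, l, C', hrun, hj, hi⟩ :=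
    exists_run_to_full_put rest' b' {((LOp.put, i) :: rest, b)} r C hr hCi
  have hblocked :
      AllPutsBlocked ((((LOp.put, j) :: l, b') ::ₘ {((LOp.put, i) :: rest, b)}), C') := by
    intro x hx
    simp only [Multiset.mem_cons, Multiset.mem_singleton] at hx
    rcases hx with rfl | rfl
    · exact ⟨j, l, rfl, hj⟩
    · exact ⟨i, rest, rfl, hi⟩
  intro hmust
  refine hblocked.not_lMayConv (hmust _ ?_)
  refine (reflTransGen_lockStep_cons_of_solo hsolo b _).trans ?_
  convert hrun using 2
  exact Multiset.pair_comm _ _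

end LockSimple

/-- for two locks, the blocking types `(P_1P_1, P_1)`,
`(P_1, P_1P_1)` and `(P_1, P_1)` are impossible for a correct translation. -/
theorem no_blocking_types_PP_P :
    ∀ (IS : Store 2) (tb tq : List (LSym 2)),
      Correct IS tb tq →
      ¬ (BlockingTypePP IS tb 0 ∧ BlockingTypeP IS tq 0) ∧
      ¬ (BlockingTypeP IS tb 0 ∧ BlockingTypePP IS tq 0) ∧
      ¬ (BlockingTypeP IS tb 0 ∧ BlockingTypeP IS tq 0) := by
  intro IS tb tq hcorr
  have hmust : LMustConv (((tb, true) ::ₘ {(tq, true)} : LProc 2), IS) := by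
    simpa [transProc, transSub, bangQues] using (hcorr bangQues).2.mp sMustConv_bangQues
  have hmust' : LMustConv (((tq, true) ::ₘ {(tb, true)} : LProc 2), IS) := by
    rwa [← Multiset.singleton_add, add_comm, Multiset.singleton_add]
  refine ⟨?_, ?_, ?_⟩
  · rintro ⟨⟨_, _, _, _, _, hs⟩, ⟨r, _, rfl, hr, _⟩⟩
    exact not_lMustConv_of_soloBlocked hs hr _ _ hmust
  · rintro ⟨⟨r, _, rfl, hr, _⟩, ⟨_, _, _, _, _, hs⟩⟩
    exact not_lMustConv_of_soloBlocked hs hr _ _ hmust'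
  · rintro ⟨⟨_, _, _, _, hs⟩, ⟨r, _, rfl, hr, _⟩⟩
    exact not_lMustConv_of_soloBlocked hs hr _ _ hmust
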